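/- For all integers 0 ≤ k ≤ j, the following identity holds in ℚ(q, a): ∑_{h=k}^{j} (−q)^h q^{h²} [j−k; h−k]_+ · (a² q^{2−2j−2h}; q²)_j / (q²;q²)_j = (−q)^k q^{k²} · (a² q^{2−2j−2k}; q²)_k / (q²;q²)_k. -/

import Mathlib

noncomputable section

open Finset

/-- The field `ℚ(q, a)` of rational functions in two variables. -/
abbrev F : Type := FractionRing (MvPolynomial (Fin 2) ℚ)

/-- The variable `q`. -/
def q : F := algebraMap (MvPolynomial (Fin 2) ℚ) F (MvPolynomial.X 0)

/-- The variable `a`. -/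
def a : F := algebraMap (MvPolynomial (Fin 2) ℚ) F (MvPolynomial.X 1)

/-- The q-Pochhammer symbol `(x; y)_n = ∏_{j=0}^{n-1} (1 - x yʲ)`. -/
def qPoch (x y : F) (n : ℕ) : F := ∏ i ∈ Finset.range n, (1 - x * y ^ i)

/-- `(q²;q²)_m = ∏_{i=1}^{m} (1 - q^{2i})`. -/
def qp (m : ℕ) : F := qPoch (q ^ 2) (q ^ 2) m

/-- The positive quantum binomial coefficient `[N; k]₊`. -/
def qbin (N k : ℕ) : F := qp N / (qp k * qp (N - k))

/-! Write `j = k + m`, `h = k + i`, `t = q²` and `c = a² q^{2-2j}`, so that the Pochhammer argument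
is `c q^{-2h}`. Splitting `(c q^{-2h}; t)_j = (c q^{-2h}; t)_h (c; t)_{m-i}` and reading the first
factor backwards gives `(-q)^h q^{h²} (c q^{-2h}; t)_h = c^h (t/c; t)_h`. After pulling out the
factor for `h = k`, the sum is the q-Chu–Vandermonde sum
`∑_i [m; i] c^i (d; t)_i (c; t)_{m-i} = (cd; t)_m` with `d = t^{k+1}/c`, so it equals
`(t^{k+1}; t)_m = (t; t)_j / (t; t)_k`. The same reflection turns the right-hand side into
`c^k (t/c; t)_k / (t; t)_k`. -/

section QPochhammer

variable (x y : F)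

@[simp]
theorem qPoch_zero : qPoch x y 0 = 1 := prod_range_zero _

theorem qPoch_succ (n : ℕ) : qPoch x y (n + 1) = qPoch x y n * (1 - x * y ^ n) :=
  prod_range_succ _ n

theorem qPoch_succ' (n : ℕ) : qPoch x y (n + 1) = (1 - x) * qPoch (x * y) y n := by
  simp only [qPoch, prod_range_succ', pow_succ', pow_zero, mul_one, mul_assoc]
  ring

theorem qPoch_add (m n : ℕ) : qPoch x y (m + n) = qPoch x y m * qPoch (x * y ^ m) y n := by
  simp only [qPoch, prod_range_add, mul_assoc, pow_add]

end QPochhammer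

theorem qPoch_reflect {u c : F} (hu : u ≠ 0) (hc : c ≠ 0) (h : ℕ) :
    (-u) ^ h * u ^ h ^ 2 * qPoch (c * u ^ (-2 * (h : ℤ))) (u ^ 2) h =
      c ^ h * qPoch (c⁻¹ * u ^ 2) (u ^ 2) h := by
  induction h with
  | zero => simp
  | succ h ih =>
    have hshift : c * u ^ (-2 * ((h + 1 : ℕ) : ℤ)) * u ^ 2 = c * u ^ (-2 * (h : ℤ)) := by
      rw [mul_assoc, ← zpow_natCast u 2, ← zpow_add₀ hu]; push_cast; ring_nf
    have hinv : u ^ (2 * (h + 1)) * u ^ (-2 * ((h + 1 : ℕ) : ℤ)) = 1 := by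
      rw [← zpow_natCast, ← zpow_add₀ hu]; push_cast; ring_nf; exact zpow_zero u
    rw [qPoch_succ', hshift, qPoch_succ]
    linear_combination (c - u ^ (2 * (h + 1))) * ih
      + (-u) ^ h * u ^ h ^ 2 * qPoch (c * u ^ (-2 * (h : ℤ))) (u ^ 2) h * c * hinv
      + c ^ h * qPoch (c⁻¹ * u ^ 2) (u ^ 2) h * u ^ (2 * (h + 1)) * mul_inv_cancel₀ hc

theorem qPoch_reflect_add {u c : F} (hu : u ≠ 0) (hc : c ≠ 0) (h n : ℕ) :
    (-u) ^ h * u ^ h ^ 2 * qPoch (c * u ^ (-2 * (h : ℤ))) (u ^ 2) (h + n) =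
      c ^ h * qPoch (c⁻¹ * u ^ 2) (u ^ 2) h * qPoch c (u ^ 2) n := by
  have hcancel : c * u ^ (-2 * (h : ℤ)) * (u ^ 2) ^ h = c := by
    rw [mul_assoc, ← pow_mul, ← zpow_natCast, ← zpow_add₀ hu]; push_cast; ring_nf; simp
  rw [qPoch_add, hcancel, ← mul_assoc, qPoch_reflect hu hc]

def gaussBinom (t : F) : ℕ → ℕ → F
  | _, 0 => 1
  | 0, _ + 1 => 0
  | n + 1, k + 1 => t ^ (n - k) * gaussBinom t n k + gaussBinom t n (k + 1)

section GaussBinom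

variable (t : F)

@[simp]
theorem gaussBinom_zero_right (n : ℕ) : gaussBinom t n 0 = 1 := by cases n <;> rfl

theorem gaussBinom_succ_succ (n k : ℕ) :
    gaussBinom t (n + 1) (k + 1) = t ^ (n - k) * gaussBinom t n k + gaussBinom t n (k + 1) :=
  rfl

theorem gaussBinom_eq_zero_of_lt {n k : ℕ} (h : n < k) : gaussBinom t n k = 0 := by
  induction n generalizing k with
  | zero => obtain ⟨k, rfl⟩ := Nat.exists_eq_succ_of_ne_zero h.ne'; rfl
  | succ n ih =>
    obtain ⟨k, rfl⟩ := Nat.exists_eq_succ_of_ne_zero (n := k) (by omega)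
    rw [gaussBinom_succ_succ, ih (by omega), ih (by omega), mul_zero, add_zero]

@[simp]
theorem gaussBinom_self (n : ℕ) : gaussBinom t n n = 1 := by
  induction n with
  | zero => rfl
  | succ n ih => simp [gaussBinom_succ_succ, ih, gaussBinom_eq_zero_of_lt t n.lt_succ_self]

theorem gaussBinom_mul_qPoch {n k : ℕ} (hk : k ≤ n) :
    gaussBinom t n k * (qPoch t t k * qPoch t t (n - k)) = qPoch t t n := by
  induction n generalizing k with
  | zero =>
    obtain rfl : k = 0 := by omega
    simp
  | succ n ih =>
    rcases k with _ | k
    · simp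
    rcases Nat.lt_or_ge k n with hlt | hge
    swap
    · obtain rfl : k = n := by omega
      simp
    obtain ⟨r, rfl⟩ := Nat.exists_eq_add_of_lt hlt
    have h₁ := ih (k := k) (by omega)
    have h₂ := ih (k := k + 1) (by omega)
    rw [show k + r + 1 - k = r + 1 by omega, qPoch_succ t t r] at h₁
    rw [show k + r + 1 - (k + 1) = r by omega, qPoch_succ t t k] at h₂
    rw [gaussBinom_succ_succ, show k + r + 1 + 1 - (k + 1) = r + 1 by omega,
      show k + r + 1 - k = r + 1 by omega, qPoch_succ t t (k + r + 1), qPoch_succ t t k,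
      qPoch_succ t t r]
    linear_combination (t ^ (r + 1) * (1 - t * t ^ k)) * h₁ + (1 - t * t ^ r) * h₂

end GaussBinom

theorem sum_gaussBinom_mul_qPoch (t c d : F) (m : ℕ) :
    ∑ i ∈ range (m + 1), gaussBinom t m i * c ^ i * qPoch d t i * qPoch c t (m - i) =
      qPoch (c * d) t m := by
  induction m with
  | zero => simp
  | succ m ih =>
    set f := fun i => gaussBinom t m i * c ^ i * qPoch d t i
    set g := fun i => f i * qPoch c t (m + 1 - i)
    set h := fun i => t ^ (m - i) * f i * c * (1 - d * t ^ i) * qPoch c t (m - i)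
    have hg : g (m + 1) = 0 := by simp [g, f, gaussBinom_eq_zero_of_lt]
    calc ∑ i ∈ range (m + 1 + 1),
          gaussBinom t (m + 1) i * c ^ i * qPoch d t i * qPoch c t (m + 1 - i)
        = ∑ i ∈ range (m + 1), (h i + g (i + 1)) + g 0 := by
          rw [sum_range_succ']
          congr 1
          · refine sum_congr rfl fun i _ => ?_
            simp only [h, g, f, gaussBinom_succ_succ, qPoch_succ, Nat.add_sub_add_right]
            ring
          · simp [g, f]
      _ = ∑ i ∈ range (m + 1), (h i + g i) := by
          rw [sum_add_distrib, add_assoc, ← sum_range_succ' g, sum_range_succ g (m + 1), hg,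
            add_zero, ← sum_add_distrib]
      _ = ∑ i ∈ range (m + 1), f i * qPoch c t (m - i) * (1 - c * d * t ^ m) := by
          refine sum_congr rfl fun i hi => ?_
          obtain ⟨r, rfl⟩ := Nat.exists_eq_add_of_le (Nat.lt_succ_iff.mp (mem_range.mp hi))
          simp only [h, g, show i + r + 1 - i = r + 1 by omega, Nat.add_sub_cancel_left,
            qPoch_succ, pow_add]
          ring
      _ = qPoch (c * d) t (m + 1) := by rw [← sum_mul, ih, qPoch_succ]

theorem sum_gaussBinom_mul_qPoch_reflect {u c : F} (hu : u ≠ 0) (hc : c ≠ 0) (k m : ℕ) :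
    ∑ i ∈ range (m + 1), (-u) ^ (k + i) * u ^ (k + i) ^ 2 * gaussBinom (u ^ 2) m i *
        qPoch (c * u ^ (-2 * ((k + i : ℕ) : ℤ))) (u ^ 2) (k + m) =
      c ^ k * qPoch (c⁻¹ * u ^ 2) (u ^ 2) k * qPoch (u ^ 2 * (u ^ 2) ^ k) (u ^ 2) m := by
  set d := c⁻¹ * u ^ 2
  have hcd : c * (d * (u ^ 2) ^ k) = u ^ 2 * (u ^ 2) ^ k := by
    simp only [d, ← mul_assoc, mul_inv_cancel₀ hc, one_mul]
  rw [← hcd, ← sum_gaussBinom_mul_qPoch (u ^ 2) c (d * (u ^ 2) ^ k) m, mul_sum]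
  refine sum_congr rfl fun i hi => ?_
  obtain ⟨r, rfl⟩ := Nat.exists_eq_add_of_le (mem_range_succ_iff.mp hi)
  rw [show k + (i + r) = (k + i) + r by ring, Nat.add_sub_cancel_left,
    mul_right_comm _ (gaussBinom _ _ _), qPoch_reflect_add hu hc, qPoch_add, pow_add]
  ring

theorem q_ne_zero : q ≠ 0 :=
  (map_ne_zero_iff _ (IsFractionRing.injective _ F)).mpr (MvPolynomial.X_ne_zero 0)

theorem a_ne_zero : a ≠ 0 :=
  (map_ne_zero_iff _ (IsFractionRing.injective _ F)).mpr (MvPolynomial.X_ne_zero 1)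

theorem one_sub_q_pow_ne_zero {n : ℕ} (hn : n ≠ 0) : 1 - q ^ n ≠ 0 := by
  have hpoly : (1 - MvPolynomial.X 0 ^ n : MvPolynomial (Fin 2) ℚ) ≠ 0 := fun h => by
    simpa [hn] using congrArg MvPolynomial.constantCoeff h
  simpa [q] using (map_ne_zero_iff _ (IsFractionRing.injective _ F)).mpr hpoly

theorem qp_ne_zero (m : ℕ) : qp m ≠ 0 := by
  unfold qp qPoch
  refine prod_ne_zero_iff.mpr fun i _ => ?_
  rw [← pow_mul, ← pow_add]
  exact one_sub_q_pow_ne_zero (by omega)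

theorem qbin_eq_gaussBinom {n k : ℕ} (hk : k ≤ n) : qbin n k = gaussBinom (q ^ 2) n k :=
  div_eq_of_eq_mul (mul_ne_zero (qp_ne_zero k) (qp_ne_zero (n - k)))
    (gaussBinom_mul_qPoch _ hk).symm

/-- Identity (4) in the proof of Lemma "closure of T UP":
`∑_{h=k}^{j} (−q)^h q^{h²} [j−k; h−k]₊ (a²q^{2−2j−2h};q²)_j/(q²;q²)_j
 = (−q)^k q^{k²} (a²q^{2−2j−2k};q²)_k/(q²;q²)_k`. -/
theorem closure_sum_identity (j k : ℕ) (hk : k ≤ j) :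
    ∑ h ∈ Finset.Icc k j,
      (-q) ^ h * q ^ (h ^ 2) * qbin (j - k) (h - k) *
        qPoch (a ^ 2 * q ^ (2 - 2 * (j : ℤ) - 2 * (h : ℤ))) (q ^ 2) j / qp j =
      (-q) ^ k * q ^ (k ^ 2) *
        qPoch (a ^ 2 * q ^ (2 - 2 * (j : ℤ) - 2 * (k : ℤ))) (q ^ 2) k / qp k := by
  obtain ⟨m, rfl⟩ := Nat.exists_eq_add_of_le hk
  set c := a ^ 2 * q ^ (2 - 2 * ((k + m : ℕ) : ℤ))
  have hc : c ≠ 0 := mul_ne_zero (pow_ne_zero 2 a_ne_zero) (zpow_ne_zero _ q_ne_zero)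
  have hshift (h : ℕ) :
      a ^ 2 * q ^ (2 - 2 * ((k + m : ℕ) : ℤ) - 2 * (h : ℤ)) = c * q ^ (-2 * (h : ℤ)) := by
    rw [mul_assoc, ← zpow_add₀ q_ne_zero]; ring_nf
  have hqp : qp (k + m) = qp k * qPoch (q ^ 2 * (q ^ 2) ^ k) (q ^ 2) m := qPoch_add _ _ k m
  have hqp_ne : qPoch (q ^ 2 * (q ^ 2) ^ k) (q ^ 2) m ≠ 0 :=
    right_ne_zero_of_mul (hqp ▸ qp_ne_zero (k + m))
  rw [← Ico_add_one_right_eq_Icc, sum_Ico_eq_sum_range, ← sum_div,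
    show k + m + 1 - k = m + 1 by omega]
  simp only [Nat.add_sub_cancel_left, hshift]
  rw [sum_congr rfl fun i hi => by rw [qbin_eq_gaussBinom (mem_range_succ_iff.mp hi)],
    sum_gaussBinom_mul_qPoch_reflect q_ne_zero hc, hqp, mul_div_mul_right _ _ hqp_ne,
    qPoch_reflect q_ne_zero hc]
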